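/- arXiv:1407.5649 — 2 statements merged into one kernel-verified Lean document; each statement's English description precedes it below -/
import Mathlib

section
/- Let V : Δ(Ω) → ℝ be bounded, continuous and concave and satisfy the dynamic programming equation. Then for every p in the investment region I, the point mass δ_p attains the supremum in the dynamic programming equation at p, and V(p) = (1−δ) + δ·V(φ(p)). (At any belief in the investment region it is optimal for the advisor not to provide information.) -/
open MeasureTheory Set

noncomputable section

variable {Ω : Type*}

/-- The investment region `I = {p ∈ Δ(Ω) : ⟨p,r⟩ ≥ 0}`. -/
def invest [Fintype Ω] (r : Ω → ℝ) : Set (Ω → ℝ) :=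
  {p | p ∈ stdSimplex ℝ Ω ∧ 0 ≤ ∑ ω, p ω * r ω}

/-- The set `S(p)` of splittings at `p`: Borel probability measures on `ℝ^Ω` carried by the
simplex `Δ(Ω)` with barycenter `p`. -/
def Splittings [Fintype Ω] (p : Ω → ℝ) : Set (Measure (Ω → ℝ)) :=
  {μ | IsProbabilityMeasure μ ∧ μ (stdSimplex ℝ Ω) = 1 ∧ ∫ q, q ∂μ = p}

/-- The payoff `(1−δ)·μ(I) + δ·∫ V(φ(q)) dμ(q)` appearing in the dynamic programming
equation. -/
def dppPayoff [Fintype Ω] (r : Ω → ℝ) (δ : ℝ) (φ : (Ω → ℝ) → Ω → ℝ)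
    (V : (Ω → ℝ) → ℝ) (μ : Measure (Ω → ℝ)) : ℝ :=
  (1 - δ) * (μ (invest r)).toReal + δ * ∫ q in stdSimplex ℝ Ω, V (φ q) ∂μ

/-- `V` satisfies the dynamic programming equation
`V(p) = sup_{μ ∈ S(p)} [(1−δ)·μ(I) + δ·∫ V(φ(q)) dμ(q)]` on the simplex. -/
def SatisfiesDPP [Fintype Ω] (r : Ω → ℝ) (δ : ℝ) (φ : (Ω → ℝ) → Ω → ℝ)
    (V : (Ω → ℝ) → ℝ) : Prop :=
  ∀ p ∈ stdSimplex ℝ Ω, V p = sSup (dppPayoff r δ φ V '' Splittings p)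

/-!
Every splitting `μ` of `p` gives `μ(I) ≤ 1`, and since `V ∘ φ` is concave (a concave function of
an affine map) Jensen's inequality gives `∫ V(φ(q)) dμ(q) ≤ V(φ(p))`. Hence every payoff is at most
`(1−δ) + δ·V(φ(p))`, and for `p ∈ I` the point mass at `p` attains this bound, so the supremum
in the dynamic programming equation equals it.
-/

theorem ConcaveOn.comp_of_affineOn {E F β : Type*} [AddCommGroup E] [Module ℝ E]
    [AddCommGroup F] [Module ℝ F] [AddCommMonoid β] [PartialOrder β] [SMul ℝ β]
    {s : Set E} {t : Set F} {φ : E → F} {g : F → β} (hs : Convex ℝ s) (hg : ConcaveOn ℝ t g)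
    (hφ : MapsTo φ s t)
    (hφaff : ∀ x ∈ s, ∀ y ∈ s, ∀ a ∈ Icc (0 : ℝ) 1,
      φ (a • x + (1 - a) • y) = a • φ x + (1 - a) • φ y) :
    ConcaveOn ℝ s (g ∘ φ) := by
  refine ⟨hs, fun x hx y hy a b ha hb hab => ?_⟩
  obtain rfl : b = 1 - a := by linarith
  simpa only [Function.comp_apply, hφaff x hx y hy a ⟨ha, by linarith⟩]
    using hg.2 (hφ hx) (hφ hy) ha hb hab

section Splittings

variable [Fintype Ω] {p : Ω → ℝ} {μ : Measure (Ω → ℝ)}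

theorem dirac_mem_splittings (hp : p ∈ stdSimplex ℝ Ω) : Measure.dirac p ∈ Splittings p :=
  ⟨inferInstance, Measure.dirac_apply_of_mem hp, integral_dirac _ p⟩

theorem ae_mem_stdSimplex_of_mem_splittings (hμ : μ ∈ Splittings p) :
    ∀ᵐ q ∂μ, q ∈ stdSimplex ℝ Ω := by
  obtain ⟨hprob, hμs, -⟩ := hμ
  rw [ae_mem_iff_measure_eq (isClosed_stdSimplex ℝ Ω).measurableSet.nullMeasurableSet, hμs,
    measure_univ]

theorem restrict_stdSimplex_of_mem_splittings (hμ : μ ∈ Splittings p) :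
    μ.restrict (stdSimplex ℝ Ω) = μ :=
  Measure.restrict_eq_self_of_ae_mem (ae_mem_stdSimplex_of_mem_splittings hμ)

theorem integrable_of_mem_splittings {E : Type*} [NormedAddCommGroup E] {f : (Ω → ℝ) → E}
    (hμ : μ ∈ Splittings p) (hf : ContinuousOn f (stdSimplex ℝ Ω)) : Integrable f μ := by
  have := hμ.1
  simpa only [IntegrableOn, restrict_stdSimplex_of_mem_splittings hμ]
    using hf.integrableOn_compact (μ := μ) (isCompact_stdSimplex ℝ Ω)

theorem ConcaveOn.setIntegral_stdSimplex_le {g : (Ω → ℝ) → ℝ}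
    (hg : ConcaveOn ℝ (stdSimplex ℝ Ω) g) (hgc : ContinuousOn g (stdSimplex ℝ Ω))
    (hμ : μ ∈ Splittings p) : ∫ q in stdSimplex ℝ Ω, g q ∂μ ≤ g p := by
  obtain ⟨hprob, -, hbar⟩ := id hμ
  rw [restrict_stdSimplex_of_mem_splittings hμ, ← hbar]
  exact hg.le_map_integral hgc (isClosed_stdSimplex ℝ Ω)
    (ae_mem_stdSimplex_of_mem_splittings hμ)
    (integrable_of_mem_splittings hμ continuousOn_id) (integrable_of_mem_splittings hμ hgc)

end Splittings

section Payoff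

variable [Fintype Ω] {r : Ω → ℝ} {δ : ℝ} {φ : (Ω → ℝ) → Ω → ℝ} {V : (Ω → ℝ) → ℝ}
  {p : Ω → ℝ}

theorem dppPayoff_dirac (hp : p ∈ invest r) :
    dppPayoff r δ φ V (Measure.dirac p) = (1 - δ) + δ * V (φ p) := by
  rw [dppPayoff, Measure.dirac_apply_of_mem hp,
    restrict_stdSimplex_of_mem_splittings (dirac_mem_splittings hp.1), integral_dirac]
  simp

theorem dppPayoff_le_of_mem_splittings (hδ : δ ∈ Icc (0 : ℝ) 1)
    (hVφ : ConcaveOn ℝ (stdSimplex ℝ Ω) (V ∘ φ))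
    (hVφc : ContinuousOn (V ∘ φ) (stdSimplex ℝ Ω))
    {μ : Measure (Ω → ℝ)} (hμ : μ ∈ Splittings p) :
    dppPayoff r δ φ V μ ≤ (1 - δ) + δ * V (φ p) := by
  have := hμ.1
  have hinvest : (μ (invest r)).toReal ≤ 1 := measureReal_le_one
  have hjensen : ∫ q in stdSimplex ℝ Ω, V (φ q) ∂μ ≤ V (φ p) :=
    hVφ.setIntegral_stdSimplex_le hVφc hμ
  obtain ⟨hδ0, hδ1⟩ := hδ
  calc dppPayoff r δ φ V μ ≤ (1 - δ) * 1 + δ * V (φ p) := by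
        unfold dppPayoff
        gcongr
    _ = (1 - δ) + δ * V (φ p) := by ring

end Payoff

theorem no_disclosure_in_I_general [Fintype Ω]
    (r : Ω → ℝ) (δ : ℝ) (hδ : δ ∈ Ico (0 : ℝ) 1)
    (φ : (Ω → ℝ) → Ω → ℝ)
    (hφmaps : MapsTo φ (stdSimplex ℝ Ω) (stdSimplex ℝ Ω))
    (hφcont : ContinuousOn φ (stdSimplex ℝ Ω))
    (hφaff : ∀ x ∈ stdSimplex ℝ Ω, ∀ y ∈ stdSimplex ℝ Ω, ∀ t ∈ Icc (0 : ℝ) 1,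
      φ (t • x + (1 - t) • y) = t • φ x + (1 - t) • φ y)
    (V : (Ω → ℝ) → ℝ)
    (hVcont : ContinuousOn V (stdSimplex ℝ Ω))
    (hVconc : ConcaveOn ℝ (stdSimplex ℝ Ω) V)
    (hV : SatisfiesDPP r δ φ V) :
    ∀ p ∈ invest r,
      Measure.dirac p ∈ Splittings p ∧
      dppPayoff r δ φ V (Measure.dirac p) = V p ∧
      V p = (1 - δ) + δ * V (φ p) := by
  intro p hp
  have hVφ := hVconc.comp_of_affineOn (convex_stdSimplex ℝ Ω) hφmaps hφaff
  have hVφc : ContinuousOn (V ∘ φ) (stdSimplex ℝ Ω) := hVcont.comp hφcont hφmaps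
  have hmax : IsGreatest (dppPayoff r δ φ V '' Splittings p) ((1 - δ) + δ * V (φ p)) :=
    ⟨⟨_, dirac_mem_splittings hp.1, dppPayoff_dirac hp⟩, by
      rintro _ ⟨μ, hμ, rfl⟩
      exact dppPayoff_le_of_mem_splittings (Ico_subset_Icc_self hδ) hVφ hVφc hμ⟩
  have hVp : V p = (1 - δ) + δ * V (φ p) := (hV p hp.1).trans hmax.csSup_eq
  exact ⟨dirac_mem_splittings hp.1, (dppPayoff_dirac hp).trans hVp.symm, hVp⟩

/-- at any belief in the investment region it is optimal not to provide
information: the point mass `δ_p` attains the supremum in the dynamic programming equation,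
and `V(p) = (1−δ) + δ·V(φ(p))`. -/
theorem no_disclosure_in_I [Fintype Ω] [Nonempty Ω]
    (r : Ω → ℝ) (δ : ℝ) (hδ : δ ∈ Ico (0 : ℝ) 1)
    (φ : (Ω → ℝ) → Ω → ℝ)
    (hφmaps : MapsTo φ (stdSimplex ℝ Ω) (stdSimplex ℝ Ω))
    (hφcont : ContinuousOn φ (stdSimplex ℝ Ω))
    (hφaff : ∀ x ∈ stdSimplex ℝ Ω, ∀ y ∈ stdSimplex ℝ Ω, ∀ t ∈ Icc (0 : ℝ) 1,
      φ (t • x + (1 - t) • y) = t • φ x + (1 - t) • φ y)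
    (V : (Ω → ℝ) → ℝ)
    (hVb : ∃ C, ∀ p ∈ stdSimplex ℝ Ω, |V p| ≤ C)
    (hVcont : ContinuousOn V (stdSimplex ℝ Ω))
    (hVconc : ConcaveOn ℝ (stdSimplex ℝ Ω) V)
    (hV : SatisfiesDPP r δ φ V) :
    ∀ p ∈ invest r,
      Measure.dirac p ∈ Splittings p ∧
      dppPayoff r δ φ V (Measure.dirac p) = V p ∧
      V p = (1 - δ) + δ * V (φ p) :=
  no_disclosure_in_I_general r δ hδ φ hφmaps hφcont hφaff V hVcont hVconc hV

end
end

section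
/- Assume no two states in Ω⁻ yield the same payoff (r(ω) ≠ r(ω′) for all distinct ω, ω′ ∈ Ω⁻). Then for every p ∈ J: (i) π*(p) is the unique optimal solution of the program (LP'); (ii) in the greedy splitting p = a_I q_I + a_J q_J one has a_J > 0 and q_J ∈ Δ(Ω⁻) (q_J is supported on Ω⁻), and if a_I > 0 then q_I lies on the investment frontier F. -/
open Set

noncomputable section

variable {Ω : Type*}

/-- `L_k(p) = Σ_{ω∈Ω⁺} p(ω)r(ω) + Σ_{i≤k} p(ω_i)r(ω_i)`, where `ω_{i+1} = e i` enumerates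
`Ω⁻` by decreasing payoff. -/
def Lfun [Fintype Ω] (r : Ω → ℝ) {K : ℕ} (e : Fin K → Ω) (k : ℕ) (p : Ω → ℝ) : ℝ :=
  ∑ ω ∈ Finset.univ.filter (fun ω => 0 ≤ r ω), p ω * r ω
    + ∑ i ∈ Finset.univ.filter (fun i : Fin K => (i : ℕ) + 1 ≤ k), p (e i) * r (e i)

/-- `k*(p) = min {k ≥ 1 : L_k(p) ≤ 0}`. -/
def kstar [Fintype Ω] (r : Ω → ℝ) {K : ℕ} (e : Fin K → Ω) (p : Ω → ℝ) : ℕ :=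
  sInf {k : ℕ | 1 ≤ k ∧ Lfun r e k p ≤ 0}

/-- The optimal solution `π*(p)` of the program (LP'): it agrees with `p` on `Ω⁺` and on
`ω_i` for `i < k*(p)`, vanishes on `ω_i` for `i > k*(p)`, and equals
`−L_{k*(p)−1}(p)/r(ω_{k*(p)})` at `ω_{k*(p)}`. -/
def piStar [Fintype Ω] [DecidableEq Ω] (r : Ω → ℝ) {K : ℕ} (e : Fin K → Ω) (p : Ω → ℝ) :
    Ω → ℝ :=
  (fun ω => if 0 ≤ r ω then p ω else 0)
    + ∑ i : Fin K,
        (if (i : ℕ) + 1 < kstar r e p then p (e i)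
         else if (i : ℕ) + 1 = kstar r e p then -(Lfun r e (kstar r e p - 1) p) / r (e i)
         else 0) • (Pi.single (e i) 1 : Ω → ℝ)

/-- The weight `a_I` of the greedy splitting: the total mass of `π*(p)`. -/
def aI [Fintype Ω] [DecidableEq Ω] (r : Ω → ℝ) {K : ℕ} (e : Fin K → Ω) (p : Ω → ℝ) : ℝ :=
  ∑ ω, piStar r e p ω

/-- The posterior `q_I` of the greedy splitting: the normalization of `π*(p)`. -/
def qI [Fintype Ω] [DecidableEq Ω] (r : Ω → ℝ) {K : ℕ} (e : Fin K → Ω) (p : Ω → ℝ) :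
    Ω → ℝ :=
  (aI r e p)⁻¹ • piStar r e p

/-- The posterior `q_J` of the greedy splitting: the normalization of `p − π*(p)`. -/
def qJ [Fintype Ω] [DecidableEq Ω] (r : Ω → ℝ) {K : ℕ} (e : Fin K → Ω) (p : Ω → ℝ) :
    Ω → ℝ :=
  (1 - aI r e p)⁻¹ • (p - piStar r e p)

/-!
(LP') is a fractional knapsack problem, and `π*(p)` is its greedy solution: it takes all of `p` on
the states whose payoff exceeds the threshold `ρ = r(ω_{k*})`, none of `p` below it, and exactly
enough at `ω_{k*}` to make the budget `⟨π, r⟩ ≥ 0` tight. For a feasible `π` every term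
`(π - π*)(ω) (r(ω) - ρ)` is `≤ 0`, and their sum is `⟨π, r⟩ - ρ (Σ π - Σ π*)`, whence `Σ π ≤ Σ π*`.
At equality all terms vanish, so `π = π*` off the level set `{r = ρ}`, which distinct payoffs make
the single state `ω_{k*}`, where the total mass pins `π` down. Since `⟨p, r⟩ < 0 = ⟨π*, r⟩`, the
vector `π*` stays strictly below `p` somewhere, so `a_I < 1`; and `p - π*` vanishes on `Ω⁺`.
-/

section Cutoff

variable {ι : Type*}

structure IsCutoffSolution (p r : ι → ℝ) (ρ : ℝ) (π₀ : ι → ℝ) : Prop where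
  eq_of_lt : ∀ i, ρ < r i → π₀ i = p i
  eq_zero_of_lt : ∀ i, r i < ρ → π₀ i = 0

variable {p r π π₀ : ι → ℝ} {ρ : ℝ}

lemma IsCutoffSolution.sub_mul_sub_nonpos (h : IsCutoffSolution p r ρ π₀)
    (hπ0 : ∀ i, 0 ≤ π i) (hπp : ∀ i, π i ≤ p i) (i : ι) :
    (π i - π₀ i) * (r i - ρ) ≤ 0 := by
  rcases lt_trichotomy (r i) ρ with hi | hi | hi
  · rw [h.eq_zero_of_lt i hi]
    exact mul_nonpos_of_nonneg_of_nonpos (by linarith [hπ0 i]) (by linarith)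
  · simp [hi]
  · rw [h.eq_of_lt i hi]
    exact mul_nonpos_of_nonpos_of_nonneg (by linarith [hπp i]) (by linarith)

variable [Fintype ι]

lemma sum_lt_sum_of_le_of_sum_mul_ne (hle : ∀ i, π i ≤ p i)
    (hne : ∑ i, π i * r i ≠ ∑ i, p i * r i) : ∑ i, π i < ∑ i, p i := by
  obtain ⟨i, hi⟩ : ∃ i, π i < p i := by
    by_contra! h
    exact hne (by rw [funext fun i => le_antisymm (hle i) (h i)])
  exact Finset.sum_lt_sum (fun i _ => hle i) ⟨i, Finset.mem_univ i, hi⟩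

lemma sum_sub_mul_sub_eq (hbal : ∑ i, π₀ i * r i = 0) :
    ∑ i, (π i - π₀ i) * (r i - ρ) = ∑ i, π i * r i - ρ * (∑ i, π i - ∑ i, π₀ i) := by
  have h : ∀ i, (π i - π₀ i) * (r i - ρ) = π i * r i - π₀ i * r i - ρ * (π i - π₀ i) :=
    fun i => by ring
  simp only [h, Finset.sum_sub_distrib, ← Finset.mul_sum, hbal]
  ring

theorem IsCutoffSolution.sum_le (h : IsCutoffSolution p r ρ π₀) (hρ : ρ < 0)
    (hbal : ∑ i, π₀ i * r i = 0) (hπ0 : ∀ i, 0 ≤ π i) (hπp : ∀ i, π i ≤ p i)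
    (hπr : 0 ≤ ∑ i, π i * r i) : ∑ i, π i ≤ ∑ i, π₀ i := by
  have hsum := Finset.sum_nonpos fun i (_ : i ∈ Finset.univ) => h.sub_mul_sub_nonpos hπ0 hπp i
  rw [sum_sub_mul_sub_eq hbal] at hsum
  nlinarith

theorem IsCutoffSolution.eq_of_sum_eq (h : IsCutoffSolution p r ρ π₀)
    (hlevel : ∀ i j, r i = ρ → r j = ρ → i = j) (hbal : ∑ i, π₀ i * r i = 0)
    (hπ0 : ∀ i, 0 ≤ π i) (hπp : ∀ i, π i ≤ p i) (hπr : 0 ≤ ∑ i, π i * r i)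
    (hsum : ∑ i, π i = ∑ i, π₀ i) : π = π₀ := by
  have hterm : ∀ i ∈ Finset.univ, (π i - π₀ i) * (r i - ρ) = 0 := by
    refine (Finset.sum_eq_zero_iff_of_nonpos fun i _ => h.sub_mul_sub_nonpos hπ0 hπp i).mp ?_
    refine le_antisymm (Finset.sum_nonpos fun i _ => h.sub_mul_sub_nonpos hπ0 hπp i) ?_
    rwa [sum_sub_mul_sub_eq hbal, hsum, sub_self, mul_zero, sub_zero]
  have hoff : ∀ i, r i ≠ ρ → π i = π₀ i := fun i hi => sub_eq_zero.mp
    ((mul_eq_zero.mp (hterm i (Finset.mem_univ i))).resolve_right (sub_ne_zero.mpr hi))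
  funext i
  by_cases hi : r i = ρ
  · have hmass : ∑ j, (π j - π₀ j) = π i - π₀ i :=
      Finset.sum_eq_single i (fun j _ hji => sub_eq_zero.mpr
        (hoff j fun hj => hji (hlevel j i hj hi))) (by simp)
    rw [Finset.sum_sub_distrib, hsum, sub_self] at hmass
    linarith
  · exact hoff i hi

end Cutoff

section Normalization

variable {ι : Type*} [Fintype ι] {q : ι → ℝ}

lemma inv_sum_smul_mem_stdSimplex (hq : ∀ i, 0 ≤ q i) (hs : ∑ i, q i ≠ 0) :
    (∑ i, q i)⁻¹ • q ∈ stdSimplex ℝ ι := by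
  refine ⟨fun i => mul_nonneg (inv_nonneg.mpr (Finset.sum_nonneg fun j _ => hq j)) (hq i), ?_⟩
  simp only [Pi.smul_apply, smul_eq_mul, ← Finset.mul_sum]
  exact inv_mul_cancel₀ hs

lemma sum_smul_inv_sum_smul (hq : ∀ i, 0 ≤ q i) : (∑ i, q i) • (∑ i, q i)⁻¹ • q = q := by
  by_cases hs : ∑ i, q i = 0
  · funext i
    simp [(Finset.sum_eq_zero_iff_of_nonneg fun j _ => hq j).mp hs i (Finset.mem_univ i)]
  · exact smul_inv_smul₀ hs q

end Normalization

section Enumeration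

variable [Fintype Ω] {K : ℕ} {r : Ω → ℝ} {e : Fin K → Ω}

lemma sum_eq_sum_filter_nonneg_add_sum_comp (he_inj : Function.Injective e)
    (he_range : ∀ ω, r ω < 0 ↔ ω ∈ Set.range e) (f : Ω → ℝ) :
    ∑ ω, f ω = ∑ ω ∈ Finset.univ.filter (fun ω => 0 ≤ r ω), f ω + ∑ i, f (e i) := by
  have hmap : Finset.univ.map ⟨e, he_inj⟩ = Finset.univ.filter (fun ω => ¬ 0 ≤ r ω) := by
    ext ω
    simp [he_range]
  rw [← Finset.sum_filter_add_sum_filter_not Finset.univ (fun ω => 0 ≤ r ω), ← hmap,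
    Finset.sum_map]
  rfl

lemma Lfun_zero_nonneg {q : Ω → ℝ} (hq : ∀ ω, 0 ≤ q ω) : 0 ≤ Lfun r e 0 q := by
  have hempty : Finset.univ.filter (fun i : Fin K => (i : ℕ) + 1 ≤ 0) = ∅ := by simp
  rw [Lfun, hempty, Finset.sum_empty, add_zero]
  exact Finset.sum_nonneg fun ω hω => mul_nonneg (hq ω) (Finset.mem_filter.mp hω).2

lemma Lfun_succ (q : Ω → ℝ) (m : Fin K) :
    Lfun r e (m + 1) q = Lfun r e m q + q (e m) * r (e m) := by
  have hfilter : Finset.univ.filter (fun i : Fin K => (i : ℕ) + 1 ≤ m + 1)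
      = insert m (Finset.univ.filter (fun i : Fin K => (i : ℕ) + 1 ≤ m)) := by
    ext i
    simp only [Finset.mem_filter, Finset.mem_univ, true_and, Finset.mem_insert, Fin.ext_iff]
    omega
  rw [Lfun, Lfun, hfilter, Finset.sum_insert (by simp)]
  ring

lemma Lfun_congr {q q' : Ω → ℝ} (k : ℕ) (hplus : ∀ ω, 0 ≤ r ω → q ω = q' ω)
    (hminus : ∀ i : Fin K, (i : ℕ) + 1 ≤ k → q (e i) = q' (e i)) :
    Lfun r e k q = Lfun r e k q' := by
  unfold Lfun
  congr 1
  · exact Finset.sum_congr rfl fun ω hω => by rw [hplus ω (Finset.mem_filter.mp hω).2]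
  · exact Finset.sum_congr rfl fun i hi => by rw [hminus i (Finset.mem_filter.mp hi).2]

lemma Lfun_card_eq_of_vanish {q : Ω → ℝ} (k : ℕ) (hq : ∀ i : Fin K, k < (i : ℕ) + 1 → q (e i) = 0) :
    Lfun r e K q = Lfun r e k q := by
  unfold Lfun
  congr 1
  refine (Finset.sum_subset (fun i _ => Finset.mem_filter.mpr ⟨Finset.mem_univ i, i.isLt⟩)
    fun i _ hi => ?_).symm
  rw [hq i (by simpa using hi), zero_mul]

lemma Lfun_card (he_inj : Function.Injective e) (he_range : ∀ ω, r ω < 0 ↔ ω ∈ Set.range e)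
    (q : Ω → ℝ) : Lfun r e K q = ∑ ω, q ω * r ω := by
  rw [sum_eq_sum_filter_nonneg_add_sum_comp he_inj he_range, Lfun,
    Finset.filter_true_of_mem fun i (_ : i ∈ Finset.univ) => Nat.succ_le_of_lt i.isLt]

end Enumeration

section Greedy

variable [Fintype Ω] {K : ℕ} {r : Ω → ℝ} {e : Fin K → Ω} {p : Ω → ℝ}

lemma exists_kstar_eq_succ (he_inj : Function.Injective e)
    (he_range : ∀ ω, r ω < 0 ↔ ω ∈ Set.range e) (hp0 : ∀ ω, 0 ≤ p ω)
    (hpJ : ∑ ω, p ω * r ω < 0) :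
    ∃ m : Fin K, kstar r e p = m + 1 ∧ 0 ≤ Lfun r e m p ∧ Lfun r e (m + 1) p ≤ 0 := by
  have hLK : Lfun r e K p < 0 := by rwa [Lfun_card he_inj he_range]
  have hK : 0 < K := by
    obtain rfl | hK := Nat.eq_zero_or_pos K
    · linarith [Lfun_zero_nonneg (r := r) (e := e) hp0]
    · exact hK
  have hmem : K ∈ {k : ℕ | 1 ≤ k ∧ Lfun r e k p ≤ 0} := ⟨hK, hLK.le⟩
  obtain ⟨hk1, hLk⟩ : 1 ≤ kstar r e p ∧ Lfun r e (kstar r e p) p ≤ 0 := Nat.sInf_mem ⟨K, hmem⟩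
  have hkK : kstar r e p ≤ K := Nat.sInf_le hmem
  refine ⟨⟨kstar r e p - 1, by omega⟩, by simp only; omega, ?_, by
    simpa only [Nat.sub_add_cancel hk1] using hLk⟩
  obtain hk | hk := Nat.eq_or_lt_of_le hk1
  · simpa only [← hk] using Lfun_zero_nonneg hp0
  · have hmin := Nat.notMem_of_lt_sInf (show kstar r e p - 1 < kstar r e p by omega)
    simp only [Set.mem_ofPred_eq, not_and, not_le] at hmin
    exact (hmin (by omega)).le

variable [DecidableEq Ω]

lemma piStar_apply_of_nonneg (he_range : ∀ ω, r ω < 0 ↔ ω ∈ Set.range e) {ω : Ω}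
    (hω : 0 ≤ r ω) : piStar r e p ω = p ω := by
  have hne : ∀ i : Fin K, ω ≠ e i := fun i h =>
    (not_lt.mpr hω) ((he_range ω).mpr ⟨i, h.symm⟩)
  simp only [piStar, Pi.add_apply, Finset.sum_apply, Pi.smul_apply, smul_eq_mul, if_pos hω,
    Pi.single_apply, hne, if_false, mul_zero, Finset.sum_const_zero, add_zero]

lemma piStar_apply_comp (he_inj : Function.Injective e)
    (he_range : ∀ ω, r ω < 0 ↔ ω ∈ Set.range e) (j : Fin K) :
    piStar r e p (e j) =
      if (j : ℕ) + 1 < kstar r e p then p (e j)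
      else if (j : ℕ) + 1 = kstar r e p then -(Lfun r e (kstar r e p - 1) p) / r (e j)
      else 0 := by
  have hneg : ¬ 0 ≤ r (e j) := not_le.mpr ((he_range (e j)).mpr ⟨j, rfl⟩)
  simp only [piStar, Pi.add_apply, Finset.sum_apply, Pi.smul_apply, smul_eq_mul, if_neg hneg,
    Pi.single_apply, he_inj.eq_iff, mul_ite, mul_one, mul_zero, Finset.sum_ite_eq,
    Finset.mem_univ, if_true, zero_add]

variable {m : Fin K}

lemma piStar_apply_comp_of_lt (he_inj : Function.Injective e)
    (he_range : ∀ ω, r ω < 0 ↔ ω ∈ Set.range e) (hk : kstar r e p = m + 1) {j : Fin K}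
    (hj : j < m) : piStar r e p (e j) = p (e j) := by
  rw [piStar_apply_comp he_inj he_range, if_pos (by rw [hk]; exact Nat.succ_lt_succ hj)]

lemma piStar_apply_comp_of_gt (he_inj : Function.Injective e)
    (he_range : ∀ ω, r ω < 0 ↔ ω ∈ Set.range e) (hk : kstar r e p = m + 1) {j : Fin K}
    (hj : m < j) : piStar r e p (e j) = 0 := by
  have hj' : (m : ℕ) < j := hj
  rw [piStar_apply_comp he_inj he_range, hk, if_neg (by omega), if_neg (by omega)]

lemma piStar_apply_comp_self (he_inj : Function.Injective e)
    (he_range : ∀ ω, r ω < 0 ↔ ω ∈ Set.range e) (hk : kstar r e p = m + 1) :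
    piStar r e p (e m) = -Lfun r e m p / r (e m) := by
  rw [piStar_apply_comp he_inj he_range, hk, if_neg (lt_irrefl _), if_pos rfl,
    Nat.add_sub_cancel]

lemma sum_piStar_mul_eq_zero (he_inj : Function.Injective e)
    (he_range : ∀ ω, r ω < 0 ↔ ω ∈ Set.range e) (hk : kstar r e p = m + 1) :
    ∑ ω, piStar r e p ω * r ω = 0 := by
  have hρ : r (e m) ≠ 0 := ((he_range (e m)).mpr ⟨m, rfl⟩).ne
  have hagree : Lfun r e m (piStar r e p) = Lfun r e m p :=
    Lfun_congr m (fun ω hω => piStar_apply_of_nonneg he_range hω)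
      fun i hi => piStar_apply_comp_of_lt he_inj he_range hk (Fin.lt_def.mpr hi)
  rw [← Lfun_card he_inj he_range,
    Lfun_card_eq_of_vanish (m + 1) fun j hj => piStar_apply_comp_of_gt he_inj he_range hk
      (Fin.lt_def.mpr (by omega)),
    Lfun_succ, hagree, piStar_apply_comp_self he_inj he_range hk, div_mul_cancel₀ _ hρ,
    add_neg_cancel]

lemma piStar_nonneg (he_inj : Function.Injective e)
    (he_range : ∀ ω, r ω < 0 ↔ ω ∈ Set.range e) (hp0 : ∀ ω, 0 ≤ p ω)
    (hk : kstar r e p = m + 1) (hLm : 0 ≤ Lfun r e m p) (ω : Ω) : 0 ≤ piStar r e p ω := by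
  rcases le_or_gt 0 (r ω) with hω | hω
  · exact (piStar_apply_of_nonneg he_range hω).symm ▸ hp0 ω
  obtain ⟨j, rfl⟩ := (he_range ω).mp hω
  rcases lt_trichotomy j m with hj | rfl | hj
  · exact (piStar_apply_comp_of_lt he_inj he_range hk hj).symm ▸ hp0 _
  · rw [piStar_apply_comp_self he_inj he_range hk]
    exact div_nonneg_of_nonpos (neg_nonpos.mpr hLm) hω.le
  · exact (piStar_apply_comp_of_gt he_inj he_range hk hj).symm ▸ le_rfl

lemma piStar_le (he_inj : Function.Injective e)
    (he_range : ∀ ω, r ω < 0 ↔ ω ∈ Set.range e) (hp0 : ∀ ω, 0 ≤ p ω)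
    (hk : kstar r e p = m + 1) (hLm : Lfun r e (m + 1) p ≤ 0) (ω : Ω) :
    piStar r e p ω ≤ p ω := by
  rcases le_or_gt 0 (r ω) with hω | hω
  · exact (piStar_apply_of_nonneg he_range hω).le
  obtain ⟨j, rfl⟩ := (he_range ω).mp hω
  rcases lt_trichotomy j m with hj | rfl | hj
  · exact (piStar_apply_comp_of_lt he_inj he_range hk hj).le
  · rw [piStar_apply_comp_self he_inj he_range hk, div_le_iff_of_neg hω]
    linarith [Lfun_succ (r := r) (e := e) p j]
  · exact (piStar_apply_comp_of_gt he_inj he_range hk hj).symm ▸ hp0 _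

lemma piStar_isCutoffSolution (he_inj : Function.Injective e)
    (he_range : ∀ ω, r ω < 0 ↔ ω ∈ Set.range e) (he_anti : Antitone fun i => r (e i))
    (hk : kstar r e p = m + 1) : IsCutoffSolution p r (r (e m)) (piStar r e p) where
  eq_of_lt ω hω := by
    rcases le_or_gt 0 (r ω) with hω₀ | hω₀
    · exact piStar_apply_of_nonneg he_range hω₀
    obtain ⟨j, rfl⟩ := (he_range ω).mp hω₀
    exact piStar_apply_comp_of_lt he_inj he_range hk (lt_of_not_ge fun h => (he_anti h).not_gt hω)
  eq_zero_of_lt ω hω := by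
    obtain ⟨j, rfl⟩ := (he_range ω).mp (hω.trans ((he_range (e m)).mpr ⟨m, rfl⟩))
    exact piStar_apply_comp_of_gt he_inj he_range hk (lt_of_not_ge fun h => (he_anti h).not_gt hω)

variable (r e p)

lemma eq_aI_smul_qI_add (hπ0 : ∀ ω, 0 ≤ piStar r e p ω) (haI : aI r e p < 1) :
    p = aI r e p • qI r e p + (1 - aI r e p) • qJ r e p := by
  rw [qI, qJ, smul_inv_smul₀ (sub_pos.mpr haI).ne', aI, sum_smul_inv_sum_smul hπ0,
    add_sub_cancel]

lemma qJ_mem_stdSimplex (hp1 : ∑ ω, p ω = 1) (hπp : ∀ ω, piStar r e p ω ≤ p ω)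
    (haI : aI r e p < 1) : qJ r e p ∈ stdSimplex ℝ Ω := by
  have hmass : 1 - aI r e p = ∑ ω, (p - piStar r e p) ω := by
    rw [aI, ← hp1, ← Finset.sum_sub_distrib]
    rfl
  rw [qJ, hmass]
  exact inv_sum_smul_mem_stdSimplex (fun ω => sub_nonneg.mpr (hπp ω))
    (hmass ▸ (sub_pos.mpr haI).ne')

lemma qJ_apply_of_nonneg (he_range : ∀ ω, r ω < 0 ↔ ω ∈ Set.range e) {ω : Ω}
    (hω : 0 ≤ r ω) : qJ r e p ω = 0 := by
  simp only [qJ, Pi.smul_apply, Pi.sub_apply, piStar_apply_of_nonneg he_range hω, sub_self,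
    smul_zero]

lemma qI_mem_stdSimplex (hπ0 : ∀ ω, 0 ≤ piStar r e p ω) (haI : 0 < aI r e p) :
    qI r e p ∈ stdSimplex ℝ Ω :=
  inv_sum_smul_mem_stdSimplex hπ0 haI.ne'

lemma sum_qI_mul_eq_zero (hbal : ∑ ω, piStar r e p ω * r ω = 0) :
    ∑ ω, qI r e p ω * r ω = 0 := by
  simp only [qI, Pi.smul_apply, smul_eq_mul, mul_assoc, ← Finset.mul_sum, hbal, mul_zero]

end Greedy

theorem greedy_splitting_structure_general [Fintype Ω] [DecidableEq Ω] {K : ℕ}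
    (r : Ω → ℝ) (e : Fin K → Ω)
    (he_inj : Function.Injective e)
    (he_range : ∀ ω, r ω < 0 ↔ ω ∈ Set.range e)
    (he_anti : Antitone fun i => r (e i))
    (hdistinct : ∀ ω ω', r ω < 0 → r ω' < 0 → ω ≠ ω' → r ω ≠ r ω')
    (p : Ω → ℝ) (hp : p ∈ stdSimplex ℝ Ω) (hpJ : ∑ ω, p ω * r ω < 0) :
    -- (i) π*(p) is feasible and is the unique optimal solution of (LP')
    ((∀ ω, 0 ≤ piStar r e p ω) ∧ (∀ ω, piStar r e p ω ≤ p ω) ∧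
      0 ≤ ∑ ω, piStar r e p ω * r ω ∧
      (∀ π : Ω → ℝ, (∀ ω, 0 ≤ π ω) → (∀ ω, π ω ≤ p ω) → 0 ≤ ∑ ω, π ω * r ω →
        ∑ ω, π ω ≤ ∑ ω, piStar r e p ω) ∧
      (∀ π : Ω → ℝ, (∀ ω, 0 ≤ π ω) → (∀ ω, π ω ≤ p ω) → 0 ≤ ∑ ω, π ω * r ω →
        ∑ ω, π ω = ∑ ω, piStar r e p ω → π = piStar r e p)) ∧
    -- (ii) structure of the greedy splitting
    (aI r e p < 1 ∧
      p = aI r e p • qI r e p + (1 - aI r e p) • qJ r e p ∧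
      qJ r e p ∈ stdSimplex ℝ Ω ∧ (∀ ω, 0 ≤ r ω → qJ r e p ω = 0) ∧
      (0 < aI r e p →
        qI r e p ∈ stdSimplex ℝ Ω ∧ ∑ ω, qI r e p ω * r ω = 0)) := by
  obtain ⟨hp0, hp1⟩ := hp
  obtain ⟨m, hk, hLm, hLm1⟩ := exists_kstar_eq_succ he_inj he_range hp0 hpJ
  have hπ0 := piStar_nonneg he_inj he_range hp0 hk hLm
  have hπp := piStar_le he_inj he_range hp0 hk hLm1
  have hbal := sum_piStar_mul_eq_zero he_inj he_range hk
  have hcut := piStar_isCutoffSolution he_inj he_range he_anti hk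
  have hρ : r (e m) < 0 := (he_range (e m)).mpr ⟨m, rfl⟩
  have hlevel : ∀ ω ω', r ω = r (e m) → r ω' = r (e m) → ω = ω' := fun ω ω' h h' =>
    by_contra fun hne => hdistinct ω ω' (h ▸ hρ) (h' ▸ hρ) hne (h.trans h'.symm)
  have haI : aI r e p < 1 :=
    hp1 ▸ sum_lt_sum_of_le_of_sum_mul_ne hπp (by rw [hbal]; exact hpJ.ne')
  exact ⟨⟨hπ0, hπp, hbal.ge, fun _ => hcut.sum_le hρ hbal,
      fun _ => hcut.eq_of_sum_eq hlevel hbal⟩,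
    haI, eq_aI_smul_qI_add r e p hπ0 haI, qJ_mem_stdSimplex r e p hp1 hπp haI,
    fun _ => qJ_apply_of_nonneg r e p he_range,
    fun h => ⟨qI_mem_stdSimplex r e p hπ0 h, sum_qI_mul_eq_zero r e p hbal⟩⟩

/-- if no two states in `Ω⁻` yield the same payoff, then for every `p ∈ J`:
(i) `π*(p)` is the unique optimal solution of (LP'); (ii) in the greedy splitting
`p = a_I q_I + a_J q_J` one has `a_J > 0` (i.e. `a_I < 1`), `q_J` is a probability vector
supported on `Ω⁻`, and if `a_I > 0` then `q_I` lies on the investment frontier `F`. -/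
theorem greedy_splitting_structure [Fintype Ω] [DecidableEq Ω] {K : ℕ}
    (r : Ω → ℝ) (e : Fin K → Ω)
    (hK : 0 < K) (hplus : ∃ ω, 0 ≤ r ω)
    (he_inj : Function.Injective e)
    (he_range : ∀ ω, r ω < 0 ↔ ω ∈ Set.range e)
    (he_anti : Antitone fun i => r (e i))
    (hdistinct : ∀ ω ω', r ω < 0 → r ω' < 0 → ω ≠ ω' → r ω ≠ r ω')
    (p : Ω → ℝ) (hp : p ∈ stdSimplex ℝ Ω) (hpJ : ∑ ω, p ω * r ω < 0) :
    -- (i) π*(p) is feasible and is the unique optimal solution of (LP')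
    ((∀ ω, 0 ≤ piStar r e p ω) ∧ (∀ ω, piStar r e p ω ≤ p ω) ∧
      0 ≤ ∑ ω, piStar r e p ω * r ω ∧
      (∀ π : Ω → ℝ, (∀ ω, 0 ≤ π ω) → (∀ ω, π ω ≤ p ω) → 0 ≤ ∑ ω, π ω * r ω →
        ∑ ω, π ω ≤ ∑ ω, piStar r e p ω) ∧
      (∀ π : Ω → ℝ, (∀ ω, 0 ≤ π ω) → (∀ ω, π ω ≤ p ω) → 0 ≤ ∑ ω, π ω * r ω →
        ∑ ω, π ω = ∑ ω, piStar r e p ω → π = piStar r e p)) ∧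
    -- (ii) structure of the greedy splitting
    (aI r e p < 1 ∧
      p = aI r e p • qI r e p + (1 - aI r e p) • qJ r e p ∧
      qJ r e p ∈ stdSimplex ℝ Ω ∧ (∀ ω, 0 ≤ r ω → qJ r e p ω = 0) ∧
      (0 < aI r e p →
        qI r e p ∈ stdSimplex ℝ Ω ∧ ∑ ω, qI r e p ω * r ω = 0)) :=
  greedy_splitting_structure_general r e he_inj he_range he_anti hdistinct p hp hpJ

end
end
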